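/- Let (μ, [x;y]) be an eigenpair of P⁻¹𝒜 with ‖x‖₂ = 1. Then either μ = 1 or μ = (α b̂ + ĉ)/â, where â = x*(αI + BᵀB)A(αI + BᵀB)x, b̂ = x*BᵀBx, ĉ = x*(BᵀB)²x. -/

import Mathlib

open Matrix

lemma re_quad {k : ℕ} (A : Matrix (Fin k) (Fin k) ℝ) (z : Fin k → ℂ) :
    (star z ⬝ᵥ (A.map (Complex.ofReal)) *ᵥ z).re =
      (fun j => (z j).re) ⬝ᵥ (A *ᵥ fun j => (z j).re) +
      (fun j => (z j).im) ⬝ᵥ (A *ᵥ fun j => (z j).im) := by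
  simp only [dotProduct, mulVec, Matrix.map_apply, Pi.star_apply, Complex.star_def,
    Complex.re_sum, Finset.mul_sum, Complex.mul_re, Complex.conj_re, Complex.conj_im,
    Complex.ofReal_re, Complex.ofReal_im, Complex.mul_im, Finset.mul_sum, Finset.sum_mul,
    ← Finset.sum_add_distrib]
  refine Finset.sum_congr rfl fun j _ => Finset.sum_congr rfl fun l _ => ?_
  ring

lemma quad_pos {k : ℕ} {A : Matrix (Fin k) (Fin k) ℝ} (hA : A.PosDef) {z : Fin k → ℂ}
    (hz : z ≠ 0) : 0 < (star z ⬝ᵥ (A.map (Complex.ofReal)) *ᵥ z).re := by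
  rw [re_quad]
  set u : Fin k → ℝ := fun j => (z j).re with hu
  set v : Fin k → ℝ := fun j => (z j).im with hv
  have huv : u ≠ 0 ∨ v ≠ 0 := by
    by_contra hcon
    push_neg at hcon
    apply hz
    funext j
    have h1 := congrFun hcon.1 j
    have h2 := congrFun hcon.2 j
    simp only [hu, hv, Pi.zero_apply] at h1 h2
    exact Complex.ext h1 h2
  have key : ∀ w : Fin k → ℝ, w ≠ 0 → 0 < w ⬝ᵥ A *ᵥ w := fun w hw => by
    simpa using hA.dotProduct_mulVec_pos hw
  have key2 : ∀ w : Fin k → ℝ, 0 ≤ w ⬝ᵥ A *ᵥ w := fun w => by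
    simpa using hA.posSemidef.dotProduct_mulVec_nonneg w
  rcases huv with h | h
  · exact add_pos_of_pos_of_nonneg (key u h) (key2 v)
  · exact add_pos_of_nonneg_of_pos (key2 u) (key v h)

lemma map_mul_ofReal {a b c : ℕ} (M : Matrix (Fin a) (Fin b) ℝ) (N : Matrix (Fin b) (Fin c) ℝ) :
    (M * N).map Complex.ofReal = M.map Complex.ofReal * N.map Complex.ofReal := by
  ext i j
  simp [Matrix.mul_apply]

set_option maxHeartbeats 1000000 in
/-- Let `(μ, [x;y])` be an eigenpair of `P⁻¹𝒜` with `‖x‖₂ = 1`. Then either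
`μ = 1` or `μ = (α b̂ + ĉ)/â`, where `â = x*(αI + BᵀB)A(αI + BᵀB)x`, `b̂ = x*BᵀBx`,
`ĉ = x*(BᵀB)²x`. -/
theorem REHSS_eigenvalue_expression (n m : ℕ)
    (A : Matrix (Fin n) (Fin n) ℝ) (B : Matrix (Fin m) (Fin n) ℝ)
    (hA : A.PosDef) (hB : B.rank = m) (hmn : m < n) (α : ℝ) (hα : 0 < α)
    (P 𝒜 : Matrix (Fin n ⊕ Fin m) (Fin n ⊕ Fin m) ℝ)
    (hP : P = Matrix.fromBlocks A (A * Bᵀ) (-B) (α • (1 : Matrix (Fin m) (Fin m) ℝ)))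
    (h𝒜 : 𝒜 = Matrix.fromBlocks A Bᵀ (-B) (0 : Matrix (Fin m) (Fin m) ℝ))
    (μ : ℂ) (x : Fin n → ℂ) (y : Fin m → ℂ)
    (hx : star x ⬝ᵥ x = 1)
    (heig : (𝒜.map (Complex.ofReal)).mulVec (Sum.elim x y) =
      μ • (P.map (Complex.ofReal)).mulVec (Sum.elim x y)) :
    μ = 1 ∨
    μ = ((α : ℂ) * (star x ⬝ᵥ ((Bᵀ * B).map (Complex.ofReal)).mulVec x) +
          star x ⬝ᵥ (((Bᵀ * B) * (Bᵀ * B)).map (Complex.ofReal)).mulVec x) /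
        (star x ⬝ᵥ (((α • (1 : Matrix (Fin n) (Fin n) ℝ) + Bᵀ * B) * A *
          (α • (1 : Matrix (Fin n) (Fin n) ℝ) + Bᵀ * B)).map (Complex.ofReal)).mulVec x) := by
  subst hP h𝒜
  set A₁ := A.map (Complex.ofReal) with hA₁
  set B₁ := B.map (Complex.ofReal) with hB₁
  have hBT : (Bᵀ).map Complex.ofReal = B₁ᵀ := by ext i j; simp [hB₁]
  have hBneg : ((-B)).map Complex.ofReal = -B₁ := by ext i j; simp [hB₁]
  have hABT : ((A * Bᵀ)).map Complex.ofReal = A₁ * B₁ᵀ := by rw [map_mul_ofReal, hBT]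
  have hsm1 : ((α • (1 : Matrix (Fin m) (Fin m) ℝ))).map Complex.ofReal
      = (α : ℂ) • (1 : Matrix (Fin m) (Fin m) ℂ) := by
    ext i j
    simp [Matrix.one_apply, apply_ite Complex.ofReal]
  have hzero : ((0 : Matrix (Fin m) (Fin m) ℝ)).map Complex.ofReal = 0 := by ext i j; simp
  rw [Matrix.fromBlocks_map, Matrix.fromBlocks_map, hBT, hBneg, hABT, hsm1, hzero,
    Matrix.fromBlocks_mulVec, Matrix.fromBlocks_mulVec] at heig
  have e1 : ∀ i, (A₁ *ᵥ x) i + (B₁ᵀ *ᵥ y) i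
      = μ * ((A₁ *ᵥ x) i + ((A₁ * B₁ᵀ) *ᵥ y) i) := by
    intro i
    have := congrFun heig (Sum.inl i)
    simpa using this
  have e2 : ∀ i, -((B₁ *ᵥ x) i) = μ * (-((B₁ *ᵥ x) i) + (α : ℂ) * y i) := by
    intro i
    have := congrFun heig (Sum.inr i)
    simpa [neg_mulVec, smul_mulVec] using this
  have h2 : ((α : ℂ) * μ) • y = (μ - 1) • (B₁ *ᵥ x) := by
    funext i
    have := e2 i
    simp only [Pi.smul_apply, smul_eq_mul]
    linear_combination -this
  have h3 : ((α : ℂ) * μ) • (B₁ᵀ *ᵥ y) = (μ - 1) • ((B₁ᵀ * B₁) *ᵥ x) := by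
    rw [← mulVec_smul, h2, mulVec_smul, mulVec_mulVec]
  have h4 : ((α : ℂ) * μ) • ((A₁ * B₁ᵀ) *ᵥ y) = (μ - 1) • ((A₁ * B₁ᵀ * B₁) *ᵥ x) := by
    rw [← mulVec_smul, h2, mulVec_smul, mulVec_mulVec]
  by_cases hμ : μ = 1
  · exact Or.inl hμ
  right
  have hμ1 : (1 : ℂ) - μ ≠ 0 := sub_ne_zero.mpr (Ne.symm hμ)
  have key : ((α : ℂ) * μ) • (A₁ *ᵥ x) + μ • ((A₁ * B₁ᵀ * B₁) *ᵥ x) = (B₁ᵀ * B₁) *ᵥ x := by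
    funext i
    have he1 := e1 i
    have hh3 := congrFun h3 i
    have hh4 := congrFun h4 i
    simp only [Pi.add_apply, Pi.smul_apply, smul_eq_mul] at hh3 hh4 ⊢
    have h5 : ((1 : ℂ) - μ) * (((α : ℂ) * μ) * (A₁ *ᵥ x) i
        + μ * ((A₁ * B₁ᵀ * B₁) *ᵥ x) i - ((B₁ᵀ * B₁) *ᵥ x) i) = 0 := by
      linear_combination ((α : ℂ) * μ) * he1 - hh3 + μ * hh4
    rcases mul_eq_zero.mp h5 with h | h
    · exact absurd h hμ1
    · linear_combination h
  set N₁ : Matrix (Fin n) (Fin n) ℂ := (α : ℂ) • 1 + B₁ᵀ * B₁ with hN₁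
  have key2 : μ • (A₁ *ᵥ (N₁ *ᵥ x)) = (B₁ᵀ * B₁) *ᵥ x := by
    have assoc : A₁ * (B₁ᵀ * B₁) = A₁ * B₁ᵀ * B₁ := (Matrix.mul_assoc A₁ B₁ᵀ B₁).symm
    rw [hN₁, add_mulVec, smul_mulVec, one_mulVec, mulVec_add, mulVec_smul,
      mulVec_mulVec, assoc, smul_add, smul_smul, mul_comm μ ((α : ℂ))]
    exact key
  have hdot : μ * (star x ⬝ᵥ ((N₁ * A₁ * N₁) *ᵥ x)) = star x ⬝ᵥ ((N₁ * (B₁ᵀ * B₁)) *ᵥ x) := by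
    have h6 : (N₁ * A₁ * N₁) *ᵥ x = N₁ *ᵥ (A₁ *ᵥ (N₁ *ᵥ x)) := by
      rw [mulVec_mulVec, mulVec_mulVec]
    rw [h6, ← smul_eq_mul, ← dotProduct_smul, ← mulVec_smul, key2, mulVec_mulVec]
  -- real matrix M and its posdefness
  set M : Matrix (Fin n) (Fin n) ℝ := α • 1 + Bᵀ * B with hM
  have hMpd : M.PosDef := by
    apply Matrix.PosDef.add_posSemidef
    · rw [smul_one_eq_diagonal]
      exact posDef_diagonal_iff.mpr fun _ => hα
    · simpa using posSemidef_conjTranspose_mul_self B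
  have hmap : M.map Complex.ofReal = N₁ := by
    ext i j
    simp [hM, hN₁, hB₁, Matrix.mul_apply, Matrix.one_apply, apply_ite Complex.ofReal]
  have hxne : x ≠ 0 := by
    intro h
    rw [h] at hx
    simp at hx
  have hMsymm : Mᵀ = M := by
    rw [hM, transpose_add, transpose_smul, transpose_one, transpose_mul, transpose_transpose]
  have hMherm : N₁ᴴ = N₁ := by
    rw [← hmap]
    have h7 : (M.map Complex.ofReal)ᴴ = Mᵀ.map Complex.ofReal := by
      ext i j
      simp [conjTranspose_apply, Complex.conj_ofReal]
    rw [h7, hMsymm]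
  have hzne : N₁ *ᵥ x ≠ 0 := by
    intro h
    have hp := quad_pos hMpd hxne
    rw [hmap, h] at hp
    simp at hp
  have hDeq : star x ⬝ᵥ ((N₁ * A₁ * N₁) *ᵥ x)
      = star (N₁ *ᵥ x) ⬝ᵥ (A₁ *ᵥ (N₁ *ᵥ x)) := by
    rw [star_mulVec, hMherm, ← dotProduct_mulVec, mulVec_mulVec, mulVec_mulVec]
  have hD0 : star x ⬝ᵥ ((N₁ * A₁ * N₁) *ᵥ x) ≠ 0 := by
    intro h
    have hp := quad_pos hA hzne
    rw [← hA₁, ← hDeq, h] at hp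
    simp at hp
  -- rewrite goal
  have hBtB : (Bᵀ * B).map Complex.ofReal = B₁ᵀ * B₁ := by rw [map_mul_ofReal, hBT]
  have hBtB2 : ((Bᵀ * B) * (Bᵀ * B)).map Complex.ofReal = (B₁ᵀ * B₁) * (B₁ᵀ * B₁) := by
    rw [map_mul_ofReal, hBtB]
  have hden : ((α • (1 : Matrix (Fin n) (Fin n) ℝ) + Bᵀ * B) * A *
      (α • (1 : Matrix (Fin n) (Fin n) ℝ) + Bᵀ * B)).map Complex.ofReal = N₁ * A₁ * N₁ := by
    rw [← hM, map_mul_ofReal, map_mul_ofReal, hmap, ← hA₁]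
  have hnum : star x ⬝ᵥ ((N₁ * (B₁ᵀ * B₁)) *ᵥ x)
      = (α : ℂ) * (star x ⬝ᵥ ((B₁ᵀ * B₁) *ᵥ x))
        + star x ⬝ᵥ (((B₁ᵀ * B₁) * (B₁ᵀ * B₁)) *ᵥ x) := by
    rw [hN₁, add_mul, smul_mul_assoc, one_mul, add_mulVec, smul_mulVec,
      dotProduct_add, dotProduct_smul, smul_eq_mul]
  rw [hBtB, hBtB2, hden, eq_div_iff hD0]
  rw [← hnum, ← hdot]
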